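/- Let T > 0, L ≥ 0 and 0 ≤ T₀ ≤ T. Assume that for every t ∈ [0,T] the map ȳ(t,·) : ℝ² → ℝ² is L-Lipschitz, that g : ℝ → [0,∞) is measurable with |û(t,x)| ≤ g(t) for all t ∈ [0,T], x ∈ ℝ², that X̄ and X̂ are flows of ȳ and of ȳ + û in integral form, and that θ : ℝ → ℝ is monotone nondecreasing on [T₀,T] with θ(t) ≥ 0 there, and ∫₀ᵀ θ(r)² g(r)² dr < ∞. Then for all T₀ ≤ t ≤ τ ≤ T and all x ∈ ℝ²: θ(t) · |X̂(τ,t,x) − X̄(τ,t,x)| ≤ T^{1/2} · e^{LT} · (∫_t^τ θ(r)² g(r)² dr)^{1/2}. -/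

import Mathlib

/-!
On `[t, τ]` the difference `D = X̂ - X̄` of the two flows satisfies
`‖D s‖ ≤ ∫_t^s (L ‖D‖ + ‖û‖)`, so the integral form of Grönwall's inequality gives
`‖D τ‖ ≤ e^{L(τ-t)} ∫_t^τ ‖û‖`. As `θ` is nondecreasing, `θ t ‖û r‖ ≤ θ r g r` for `r ≥ t`,
and Cauchy–Schwarz bounds `∫_t^τ θ g` by `√(τ - t) (∫_t^τ θ² g²)^{1/2}`. Monotonicity also
makes `θ` measurable on `[t, τ]`, so `θ g`, being square integrable there, is integrable.
-/

open MeasureTheory Set Real Filter Topology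
open scoped Interval

theorem le_mul_exp_of_le_add_mul_integral {φ : ℝ → ℝ} {a b A L : ℝ} (hL : 0 ≤ L)
    (hφ : ContinuousOn φ (Icc a b)) (h : ∀ s ∈ Icc a b, φ s ≤ A + L * ∫ r in a..s, φ r) :
    ∀ s ∈ Icc a b, φ s ≤ A * exp (L * (s - a)) := by
  intro s hs
  have hab : a ≤ b := hs.1.trans hs.2
  have hφi : IntervalIntegrable φ volume a b := (uIcc_of_le hab ▸ hφ).intervalIntegrable
  -- the differential Grönwall inequality applies to `w`, since `w' = L φ ≤ L w`
  set w : ℝ → ℝ := fun s => A + L * ∫ r in a..s, φ r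
  have hw : ContinuousOn w (Icc a b) := by
    refine continuousOn_const.add (continuousOn_const.mul ?_)
    simpa [uIcc_of_le hab] using
      intervalIntegral.continuousOn_primitive_interval' hφi left_mem_uIcc
  have hw' : ∀ s ∈ Ico a b, HasDerivWithinAt w (L * φ s) (Ici s) s := by
    intro s hs
    have hnhds : Icc a b ∈ 𝓝[>] s := Icc_mem_nhdsGT_of_mem hs
    refine ((intervalIntegral.integral_hasDerivWithinAt_right ?_ ?_
      ((hφ s (Ico_subset_Icc_self hs)).mono_of_mem_nhdsWithin hnhds)).const_mul L).const_add A
    · exact hφi.mono_set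
        (uIcc_subset_uIcc left_mem_uIcc (Icc_subset_uIcc (Ico_subset_Icc_self hs)))
    · exact (hφ.stronglyMeasurableAtFilter_nhdsWithin measurableSet_Icc s).filter_mono
        (nhdsWithin_le_of_mem hnhds)
  calc φ s ≤ w s := h s hs
    _ ≤ gronwallBound A L 0 (s - a) :=
      le_gronwallBound_of_liminf_deriv_right_le hw
        (fun s hs _ hr => (hw' s hs).liminf_right_slope_le hr) (by simp [w])
        (fun s hs => by simpa using mul_le_mul_of_nonneg_left (h s (Ico_subset_Icc_self hs)) hL)
        s hs
    _ = A * exp (L * (s - a)) := gronwallBound_ε0 _ _ _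

theorem intervalIntegral.sq_integral_le_mul_integral_sq {f : ℝ → ℝ} {a b : ℝ} (hab : a ≤ b)
    (hf : IntervalIntegrable f volume a b)
    (hf2 : IntervalIntegrable (fun r => f r ^ 2) volume a b) :
    (∫ r in a..b, f r) ^ 2 ≤ (b - a) * ∫ r in a..b, f r ^ 2 := by
  have hquad : ∀ c : ℝ,
      0 ≤ (b - a) * (c * c) + (-2 * ∫ r in a..b, f r) * c + ∫ r in a..b, f r ^ 2 := by
    intro c
    have h : 0 ≤ ∫ r in a..b, (f r - c) ^ 2 := integral_nonneg hab fun r _ => sq_nonneg (f r - c)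
    have hexpand : (fun r => (f r - c) ^ 2) = fun r => f r ^ 2 - 2 * c * f r + c ^ 2 := by
      ext r; ring
    rw [hexpand, integral_add (hf2.sub (hf.const_mul _)) intervalIntegrable_const,
      integral_sub hf2 (hf.const_mul _), integral_const_mul, integral_const, smul_eq_mul] at h
    linarith
  have hdiscrim := discrim_le_zero hquad
  rw [discrim] at hdiscrim
  linarith

theorem intervalIntegral.integral_le_sqrt_mul_sqrt_integral_sq {f : ℝ → ℝ} {a b : ℝ} (hab : a ≤ b)
    (hf : IntervalIntegrable f volume a b)
    (hf2 : IntervalIntegrable (fun r => f r ^ 2) volume a b) :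
    ∫ r in a..b, f r ≤ √(b - a) * √(∫ r in a..b, f r ^ 2) := by
  rw [← sqrt_mul (sub_nonneg.2 hab)]
  exact (le_abs_self _).trans (abs_le_sqrt (sq_integral_le_mul_integral_sq hab hf hf2))

theorem IntervalIntegrable.of_sq {f : ℝ → ℝ} {a b : ℝ}
    (hf : AEStronglyMeasurable f (volume.restrict (Ι a b)))
    (hf2 : IntervalIntegrable (fun r => f r ^ 2) volume a b) : IntervalIntegrable f volume a b := by
  rw [intervalIntegrable_iff] at hf2 ⊢
  have : IsFiniteMeasure (volume.restrict (Ι a b)) := by rw [uIoc]; infer_instance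
  exact ((memLp_two_iff_integrable_sq hf).2 hf2).integrable one_le_two

section PerturbedIntegralCurve

variable {E : Type*} [NormedAddCommGroup E] [NormedSpace ℝ E] {v : ℝ → E → E} {γ η p : ℝ → E}
  {h : ℝ → ℝ} {x : E} {a b L : ℝ}
  (hv : ∀ r ∈ Icc a b, ∀ y z, ‖v r y - v r z‖ ≤ L * ‖y - z‖) (hp : ∀ r ∈ Icc a b, ‖p r‖ ≤ h r)
  (hh : IntervalIntegrable h volume a b)
  (hγ : ContinuousOn γ (Icc a b)) (hη : ContinuousOn η (Icc a b))
  (hγi : IntervalIntegrable (fun r => v r (γ r)) volume a b)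
  (hηi : IntervalIntegrable (fun r => v r (η r) + p r) volume a b)
  (hγeq : ∀ s ∈ Icc a b, γ s = x + ∫ r in a..s, v r (γ r))
  (hηeq : ∀ s ∈ Icc a b, η s = x + ∫ r in a..s, (v r (η r) + p r))
include hv hp hh hγ hη hγi hηi hγeq hηeq

theorem norm_sub_le_integral_add_mul_integral_norm_sub :
    ∀ s ∈ Icc a b, ‖η s - γ s‖ ≤ (∫ r in a..s, h r) + L * ∫ r in a..s, ‖η r - γ r‖ := by
  intro s hs
  have hsub : uIcc a s ⊆ uIcc a b := uIcc_subset_uIcc left_mem_uIcc (Icc_subset_uIcc hs)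
  have hsub' : Icc a s ⊆ Icc a b := Icc_subset_Icc_right hs.2
  have hdiff : η s - γ s = ∫ r in a..s, (v r (η r) + p r - v r (γ r)) := by
    rw [hηeq s hs, hγeq s hs,
      intervalIntegral.integral_sub (hηi.mono_set hsub) (hγi.mono_set hsub)]
    abel
  have hpt : ∀ r ∈ Icc a s, ‖v r (η r) + p r - v r (γ r)‖ ≤ L * ‖η r - γ r‖ + h r := by
    intro r hr
    calc ‖v r (η r) + p r - v r (γ r)‖ = ‖(v r (η r) - v r (γ r)) + p r‖ := by congr 1; abel
      _ ≤ ‖v r (η r) - v r (γ r)‖ + ‖p r‖ := norm_add_le _ _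
      _ ≤ L * ‖η r - γ r‖ + h r := add_le_add (hv r (hsub' hr) _ _) (hp r (hsub' hr))
  have hdist : IntervalIntegrable (fun r => ‖η r - γ r‖) volume a s :=
    ((hη.sub hγ).norm.mono (uIcc_of_le hs.1 ▸ hsub')).intervalIntegrable
  calc ‖η s - γ s‖ ≤ ∫ r in a..s, ‖v r (η r) + p r - v r (γ r)‖ :=
        hdiff ▸ intervalIntegral.norm_integral_le_integral_norm hs.1
    _ ≤ ∫ r in a..s, (L * ‖η r - γ r‖ + h r) :=
        intervalIntegral.integral_mono_on hs.1 ((hηi.sub hγi).mono_set hsub).norm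
          ((hdist.const_mul L).add (hh.mono_set hsub)) hpt
    _ = (∫ r in a..s, h r) + L * ∫ r in a..s, ‖η r - γ r‖ := by
        rw [intervalIntegral.integral_add (hdist.const_mul L) (hh.mono_set hsub),
          intervalIntegral.integral_const_mul, add_comm]

theorem norm_sub_le_integral_mul_exp (hL : 0 ≤ L) :
    ∀ s ∈ Icc a b, ‖η s - γ s‖ ≤ (∫ r in a..b, h r) * exp (L * (s - a)) := by
  refine le_mul_exp_of_le_add_mul_integral hL (hη.sub hγ).norm fun s hs => ?_
  refine (norm_sub_le_integral_add_mul_integral_norm_sub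
    hv hp hh hγ hη hγi hηi hγeq hηeq s hs).trans ?_
  gcongr
  refine intervalIntegral.integral_mono_interval le_rfl hs.1 hs.2 ?_ hh
  exact (ae_restrict_iff' measurableSet_Ioc).2 <| ae_of_all _ fun r hr =>
    (norm_nonneg _).trans (hp r (Ioc_subset_Icc_self hr))

end PerturbedIntegralCurve

theorem stmt_3_general
    (T L T₀ : ℝ) (hL : 0 ≤ L) (hT₀0 : 0 ≤ T₀)
    (ybar uhat : ℝ → EuclideanSpace ℝ (Fin 2) → EuclideanSpace ℝ (Fin 2))
    (Xbar Xhat : ℝ → ℝ → EuclideanSpace ℝ (Fin 2) → EuclideanSpace ℝ (Fin 2))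
    (hlip : ∀ t ∈ Set.Icc (0:ℝ) T, ∀ x x', ‖ybar t x - ybar t x'‖ ≤ L * ‖x - x'‖)
    (g : ℝ → ℝ) (hg_meas : Measurable g)
    (hu_bound : ∀ t ∈ Set.Icc (0:ℝ) T, ∀ x, ‖uhat t x‖ ≤ g t)
    (hXbar_cont : ∀ τ ∈ Set.Icc (0:ℝ) T, ∀ x, ContinuousOn (fun r => Xbar r τ x) (Set.Icc 0 T))
    (hXhat_cont : ∀ τ ∈ Set.Icc (0:ℝ) T, ∀ x, ContinuousOn (fun r => Xhat r τ x) (Set.Icc 0 T))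
    (hXbar_intble : ∀ τ t : ℝ, 0 ≤ τ → τ ≤ t → t ≤ T → ∀ x,
      IntervalIntegrable (fun r => ybar r (Xbar r τ x)) volume τ t)
    (hXhat_intble : ∀ τ t : ℝ, 0 ≤ τ → τ ≤ t → t ≤ T → ∀ x,
      IntervalIntegrable (fun r => ybar r (Xhat r τ x) + uhat r (Xhat r τ x)) volume τ t)
    (hXbar_eq : ∀ τ t : ℝ, 0 ≤ τ → τ ≤ t → t ≤ T → ∀ x,
      Xbar t τ x = x + ∫ r in τ..t, ybar r (Xbar r τ x))
    (hXhat_eq : ∀ τ t : ℝ, 0 ≤ τ → τ ≤ t → t ≤ T → ∀ x,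
      Xhat t τ x = x + ∫ r in τ..t, (ybar r (Xhat r τ x) + uhat r (Xhat r τ x)))
    (θ : ℝ → ℝ) (hθmono : MonotoneOn θ (Set.Icc T₀ T))
    (hθg_int : IntervalIntegrable (fun r => (θ r)^2 * (g r)^2) volume 0 T) :
    ∀ t τ : ℝ, T₀ ≤ t → t ≤ τ → τ ≤ T → ∀ x,
      θ t * ‖Xhat τ t x - Xbar τ t x‖ ≤
        Real.sqrt T * Real.exp (L * T) * Real.sqrt (∫ r in t..τ, (θ r)^2 * (g r)^2) := by
  intro t τ ht htτ hτT x
  rcases le_or_gt (θ t) 0 with hθt | hθt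
  · exact (mul_nonpos_of_nonpos_of_nonneg hθt (norm_nonneg _)).trans (by positivity)
  have h0t : 0 ≤ t := hT₀0.trans ht
  have hsub : Icc t τ ⊆ Icc 0 T := Icc_subset_Icc h0t hτT
  have htT : t ∈ Icc 0 T := hsub ⟨le_rfl, htτ⟩
  have hθ_ge : ∀ r ∈ Icc t τ, θ t ≤ θ r := fun r hr =>
    hθmono ⟨ht, htτ.trans hτT⟩ ⟨ht.trans hr.1, hr.2.trans hτT⟩ hr.1
  have hθg_sq : IntervalIntegrable (fun r => (θ r * g r) ^ 2) volume t τ := by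
    simpa only [mul_pow] using hθg_int.mono_set (by
      rwa [uIcc_of_le htτ, uIcc_of_le (h0t.trans (htτ.trans hτT))])
  have hθ_meas : AEMeasurable θ (volume.restrict (Ι t τ)) := by
    rw [uIoc_of_le htτ]
    exact aemeasurable_restrict_of_monotoneOn measurableSet_Ioc
      (hθmono.mono (Ioc_subset_Icc_self.trans (Icc_subset_Icc ht hτT)))
  have hθg : IntervalIntegrable (fun r => θ r * g r) volume t τ :=
    .of_sq (hθ_meas.mul hg_meas.aemeasurable).aestronglyMeasurable hθg_sq
  have hu : ∀ r ∈ Icc t τ, ‖uhat r (Xhat r t x)‖ ≤ θ r * g r / θ t := by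
    intro r hr
    have hg := hu_bound r (hsub hr) (Xhat r t x)
    rw [le_div_iff₀ hθt, mul_comm (θ r)]
    exact mul_le_mul hg (hθ_ge r hr) hθt.le ((norm_nonneg _).trans hg)
  have hflow := norm_sub_le_integral_mul_exp (fun r hr => hlip r (hsub hr)) hu
    (hθg.div_const _) ((hXbar_cont t htT x).mono hsub) ((hXhat_cont t htT x).mono hsub)
    (hXbar_intble t τ h0t htτ hτT x) (hXhat_intble t τ h0t htτ hτT x)
    (fun s hs => hXbar_eq t s h0t hs.1 (hs.2.trans hτT) x)
    (fun s hs => hXhat_eq t s h0t hs.1 (hs.2.trans hτT) x) hL τ ⟨htτ, le_rfl⟩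
  rw [intervalIntegral.integral_div] at hflow
  have hCS := intervalIntegral.integral_le_sqrt_mul_sqrt_integral_sq htτ hθg hθg_sq
  simp only [mul_pow] at hCS
  calc θ t * ‖Xhat τ t x - Xbar τ t x‖
      ≤ θ t * ((∫ r in t..τ, θ r * g r) / θ t * exp (L * (τ - t))) := by gcongr
    _ = exp (L * (τ - t)) * ∫ r in t..τ, θ r * g r := by field_simp
    _ ≤ exp (L * (τ - t)) * (√(τ - t) * √(∫ r in t..τ, θ r ^ 2 * g r ^ 2)) := by gcongr
    _ ≤ exp (L * T) * (√T * √(∫ r in t..τ, θ r ^ 2 * g r ^ 2)) := by gcongr <;> linarith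
    _ = √T * exp (L * T) * √(∫ r in t..τ, θ r ^ 2 * g r ^ 2) := by ring

/-- The weighted flow-comparison estimate (4.45) of Lemma 4.3 of the paper:
`θ(t) |X̂(τ,t,x) − X̄(τ,t,x)| ≤ √T e^{LT} (∫_t^τ θ² g²)^{1/2}` for `T₀ ≤ t ≤ τ ≤ T`,
where `θ` is nonnegative and nondecreasing on `[T₀, T]`. -/
theorem stmt_3
    (T L T₀ : ℝ) (hT : 0 < T) (hL : 0 ≤ L) (hT₀0 : 0 ≤ T₀) (hT₀T : T₀ ≤ T)
    (ybar uhat : ℝ → EuclideanSpace ℝ (Fin 2) → EuclideanSpace ℝ (Fin 2))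
    (Xbar Xhat : ℝ → ℝ → EuclideanSpace ℝ (Fin 2) → EuclideanSpace ℝ (Fin 2))
    (hlip : ∀ t ∈ Set.Icc (0:ℝ) T, ∀ x x', ‖ybar t x - ybar t x'‖ ≤ L * ‖x - x'‖)
    (g : ℝ → ℝ) (hg_meas : Measurable g) (hg_nonneg : ∀ t, 0 ≤ g t)
    (hu_bound : ∀ t ∈ Set.Icc (0:ℝ) T, ∀ x, ‖uhat t x‖ ≤ g t)
    (hXbar_cont : ∀ τ ∈ Set.Icc (0:ℝ) T, ∀ x, ContinuousOn (fun r => Xbar r τ x) (Set.Icc 0 T))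
    (hXhat_cont : ∀ τ ∈ Set.Icc (0:ℝ) T, ∀ x, ContinuousOn (fun r => Xhat r τ x) (Set.Icc 0 T))
    (hXbar_intble : ∀ τ t : ℝ, 0 ≤ τ → τ ≤ t → t ≤ T → ∀ x,
      IntervalIntegrable (fun r => ybar r (Xbar r τ x)) volume τ t)
    (hXhat_intble : ∀ τ t : ℝ, 0 ≤ τ → τ ≤ t → t ≤ T → ∀ x,
      IntervalIntegrable (fun r => ybar r (Xhat r τ x) + uhat r (Xhat r τ x)) volume τ t)
    (hXbar_eq : ∀ τ t : ℝ, 0 ≤ τ → τ ≤ t → t ≤ T → ∀ x,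
      Xbar t τ x = x + ∫ r in τ..t, ybar r (Xbar r τ x))
    (hXhat_eq : ∀ τ t : ℝ, 0 ≤ τ → τ ≤ t → t ≤ T → ∀ x,
      Xhat t τ x = x + ∫ r in τ..t, (ybar r (Xhat r τ x) + uhat r (Xhat r τ x)))
    (θ : ℝ → ℝ) (hθmono : MonotoneOn θ (Set.Icc T₀ T))
    (hθnonneg : ∀ t ∈ Set.Icc T₀ T, 0 ≤ θ t)
    (hθg_int : IntervalIntegrable (fun r => (θ r)^2 * (g r)^2) volume 0 T) :
    ∀ t τ : ℝ, T₀ ≤ t → t ≤ τ → τ ≤ T → ∀ x,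
      θ t * ‖Xhat τ t x - Xbar τ t x‖ ≤
        Real.sqrt T * Real.exp (L * T) * Real.sqrt (∫ r in t..τ, (θ r)^2 * (g r)^2) :=
  stmt_3_general T L T₀ hL hT₀0 ybar uhat Xbar Xhat hlip g hg_meas hu_bound hXbar_cont hXhat_cont
    hXbar_intble hXhat_intble hXbar_eq hXhat_eq θ hθmono hθg_int
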